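/- arXiv:1209.3964 — 2 statements merged into one kernel-verified Lean document; each statement's English description precedes it below -/
import Mathlib

section
/- Iteration lemma: let n ∈ ℕ and let M_0, M_1, …, M_n, V_1, …, V_n, w_1, …, w_n be nonnegative integrable functions on a probability space such that E(M_{k-1}² + V_k²)^{1/2} + E w_k ≤ E M_k for all 1 ≤ k ≤ n. Then E(Σ_{k=1}^n V_k²)^{1/2} + E Σ_{k=1}^n w_k ≤ 2 (E M_n)^{1/2} (E max_{k ≤ n} M_k)^{1/2}. -/
open MeasureTheory Complex

noncomputable section

/-- `F = (F k)_{k ≤ n}` is a martingale on `(Ω, μ)` with respect to the filtration `ff`: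
each `F k` (for `k ≤ n`) is integrable, measurable with respect to `ff k`, and
`E[F k | ff (k-1)] = F (k-1)` for `1 ≤ k ≤ n`. -/
structure MartOn {Ω : Type*} [MeasurableSpace Ω] (μ : Measure Ω)
    (ff : ℕ → MeasurableSpace Ω) (n : ℕ) (F : ℕ → Ω → ℂ) : Prop where
  integrable : ∀ k, k ≤ n → Integrable (F k) μ
  adapted : ∀ k, k ≤ n → Measurable[ff k] (F k)
  mart : ∀ k, 1 ≤ k → k ≤ n → μ[F k | ff (k-1)] =ᵐ[μ] F (k-1)

/-- The `L¹` norm `E|F_n|` of the martingale `F = (F k)_{k ≤ n}`. -/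
def l1 {Ω : Type*} [MeasurableSpace Ω] (μ : Measure Ω) (n : ℕ) (F : ℕ → Ω → ℂ) : ℝ :=
  ∫ x, ‖F n x‖ ∂μ

/-- The `H¹` (square function) norm `E (∑_{k=1}^n |ΔF_k|²)^{1/2}`. -/
def h1 {Ω : Type*} [MeasurableSpace Ω] (μ : Measure Ω) (n : ℕ) (F : ℕ → Ω → ℂ) : ℝ :=
  ∫ x, Real.sqrt (∑ k ∈ Finset.Icc 1 n, ‖F k x - F (k-1) x‖ ^ 2) ∂μ

/-- The previsible norm `E (∑_{k=1}^n E_{k-1}|ΔF_k|²)^{1/2}`. -/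
def pnorm {Ω : Type*} [MeasurableSpace Ω] (μ : Measure Ω) (ff : ℕ → MeasurableSpace Ω)
    (n : ℕ) (F : ℕ → Ω → ℂ) : ℝ :=
  ∫ x, Real.sqrt (∑ k ∈ Finset.Icc 1 n,
    (μ[fun y => ‖F k y - F (k-1) y‖ ^ 2 | ff (k-1)]) x) ∂μ

/-- The absolutely summing norm `E ∑_{k=1}^n |ΔF_k|`. -/
def anorm {Ω : Type*} [MeasurableSpace Ω] (μ : Measure Ω) (n : ℕ) (F : ℕ → Ω → ℂ) : ℝ :=
  ∫ x, ∑ k ∈ Finset.Icc 1 n, ‖F k x - F (k-1) x‖ ∂μ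

/-- The previsible norm `E (∑_{k=1}^n E_{k-1}|d_k|²)^{1/2}` of a (real-valued)
martingale difference sequence `d = (d k)_{1 ≤ k ≤ n}`, used for martingale transforms. -/
def pnormR {Ω : Type*} [MeasurableSpace Ω] (μ : Measure Ω) (ff : ℕ → MeasurableSpace Ω)
    (n : ℕ) (d : ℕ → Ω → ℝ) : ℝ :=
  ∫ x, Real.sqrt (∑ k ∈ Finset.Icc 1 n, (μ[fun y => (d k y) ^ 2 | ff (k-1)]) x) ∂μ

/-- `conj v / |v|`, set to `1` at `v = 0`. -/
def unitDir (v : ℂ) : ℂ := if v = 0 then 1 else (starRingEnd ℂ) v / ((‖v‖ : ℝ) : ℂ)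

/-! With `c = max_{k ≤ n} M_k`, the pointwise inequality
`s ≤ λ ((c² + s²)^{1/2} - c) + c / λ` (`λ ≥ 1`), applied to `s = (∑ V_k²)^{1/2}`, combined with
the subadditivity of `x ↦ (c² + x)^{1/2} - c` on `[0, ∞)` and the antitonicity of
`b ↦ (b² + v)^{1/2} - b`, gives `(∑ V_k²)^{1/2} ≤ λ ∑_k ((M_{k-1}² + V_k²)^{1/2} - M_{k-1}) + c / λ`.
Taking expectations, the hypothesis telescopes to
`E (∑ V_k²)^{1/2} + E ∑ w_k ≤ λ E M_n + E c / λ`, and `λ = (E c / E M_n)^{1/2}` is optimal. -/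

open Finset Filter Topology

namespace Real

lemma sqrt_sq_add_sub_le_of_le {b c : ℝ} (v : ℝ) (hv : 0 ≤ v) (hbc : b ≤ c) :
    √(c ^ 2 + v) - c ≤ √(b ^ 2 + v) - b := by
  obtain ⟨hb', hb⟩ := abs_le.1 (abs_le_sqrt (show b ^ 2 ≤ b ^ 2 + v by linarith))
  have hsq := sq_sqrt (show 0 ≤ b ^ 2 + v by positivity)
  rw [sub_le_iff_le_add, sqrt_le_left (by linarith)]
  nlinarith [mul_nonneg (sub_nonneg.2 hbc) (sub_nonneg.2 hb)]

lemma sqrt_sq_add_add_sub_le {c x y : ℝ} (hc : 0 ≤ c) (hx : 0 ≤ x) (hy : 0 ≤ y) :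
    √(c ^ 2 + (x + y)) - c ≤ (√(c ^ 2 + x) - c) + (√(c ^ 2 + y) - c) := by
  have hxc : c ≤ √(c ^ 2 + x) := le_sqrt_of_sq_le (by linarith)
  have hyc : c ≤ √(c ^ 2 + y) := le_sqrt_of_sq_le (by linarith)
  have hxsq := sq_sqrt (show 0 ≤ c ^ 2 + x by positivity)
  have hysq := sq_sqrt (show 0 ≤ c ^ 2 + y by positivity)
  rw [sub_le_iff_le_add, sqrt_le_left (by linarith)]
  nlinarith [mul_nonneg (sub_nonneg.2 hxc) (sub_nonneg.2 hyc)]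

lemma sqrt_sq_add_sum_sub_le {ι : Type*} (s : Finset ι) {v : ι → ℝ} (hv : ∀ i ∈ s, 0 ≤ v i)
    {c : ℝ} (hc : 0 ≤ c) :
    √(c ^ 2 + ∑ i ∈ s, v i) - c ≤ ∑ i ∈ s, (√(c ^ 2 + v i) - c) :=
  le_sum_of_subadditive_on_pred (fun x => √(c ^ 2 + x) - c) (0 ≤ ·) (by simp [sqrt_sq hc])
    (fun _ _ hx hy => sqrt_sq_add_add_sub_le hc hx hy) (fun _ _ => add_nonneg) v hv

lemma le_mul_sqrt_sq_add_sq_sub_add_div {c s l : ℝ} (hc : 0 ≤ c) (hs : 0 ≤ s) (hl : 1 ≤ l) :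
    s ≤ l * (√(c ^ 2 + s ^ 2) - c) + c / l := by
  set q := √(c ^ 2 + s ^ 2)
  have hqsq : q ^ 2 = c ^ 2 + s ^ 2 := sq_sqrt (by positivity)
  have hl0 : 0 < l := by linarith
  have hl2 : 0 ≤ l ^ 2 - 1 := by nlinarith
  have hsq : (l * s + (l ^ 2 - 1) * c) ^ 2 ≤ (l ^ 2 * q) ^ 2 := by
    have hid : (l ^ 2 * q) ^ 2 - (l * s + (l ^ 2 - 1) * c) ^ 2
        = (l ^ 2 - 1) * (l * s - c) ^ 2 + (l * c) ^ 2 := by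
      linear_combination l ^ 4 * hqsq
    nlinarith [mul_nonneg hl2 (sq_nonneg (l * s - c)), sq_nonneg (l * c)]
  have key : l * s + (l ^ 2 - 1) * c ≤ l ^ 2 * q :=
    (pow_le_pow_iff_left₀ (by positivity) (by positivity) two_ne_zero).1 hsq
  have hexp : l * (l * (q - c) + c / l) = l ^ 2 * q - (l ^ 2 - 1) * c := by
    field_simp
    ring
  exact le_of_mul_le_mul_left (by linarith) hl0

lemma sqrt_sum_sq_le_mul_sum_add_div {ι : Type*} (s : Finset ι) {b v : ι → ℝ} {c l : ℝ}
    (hc : 0 ≤ c) (hbc : ∀ i ∈ s, b i ≤ c) (hl : 1 ≤ l) :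
    √(∑ i ∈ s, v i ^ 2) ≤ l * ∑ i ∈ s, (√(b i ^ 2 + v i ^ 2) - b i) + c / l := by
  have hl0 : 0 ≤ l := by linarith
  calc √(∑ i ∈ s, v i ^ 2)
      ≤ l * (√(c ^ 2 + √(∑ i ∈ s, v i ^ 2) ^ 2) - c) + c / l :=
        le_mul_sqrt_sq_add_sq_sub_add_div hc (sqrt_nonneg _) hl
    _ = l * (√(c ^ 2 + ∑ i ∈ s, v i ^ 2) - c) + c / l := by
        rw [sq_sqrt (sum_nonneg fun i _ => sq_nonneg (v i))]
    _ ≤ l * ∑ i ∈ s, (√(c ^ 2 + v i ^ 2) - c) + c / l := by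
        gcongr
        exact sqrt_sq_add_sum_sub_le s (fun i _ => sq_nonneg (v i)) hc
    _ ≤ l * ∑ i ∈ s, (√(b i ^ 2 + v i ^ 2) - b i) + c / l := by
        gcongr l * ?_ + _
        refine sum_le_sum fun i hi => ?_
        exact sqrt_sq_add_sub_le_of_le _ (sq_nonneg _) (hbc i hi)

lemma le_two_mul_sqrt_mul_sqrt_of_forall_le {X A B : ℝ} (hA : 0 ≤ A) (hAB : A ≤ B)
    (h : ∀ l : ℝ, 1 ≤ l → X ≤ l * A + B / l) : X ≤ 2 * √A * √B := by
  rcases hA.eq_or_lt with rfl | hA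
  · have hB : Tendsto (fun l : ℝ => B / l) atTop (𝓝 0) := tendsto_const_nhds.div_atTop tendsto_id
    simpa using ge_of_tendsto hB ((eventually_ge_atTop 1).mono fun l hl => by simpa using h l hl)
  · have hsA : 0 < √A := sqrt_pos.2 hA
    have hsB : 0 < √B := sqrt_pos.2 (hA.trans_le hAB)
    have := h (√B / √A) ((one_le_div hsA).2 (sqrt_le_sqrt hAB))
    have e1 : √B / √A * A = √A * √B := by
      field_simp
      exact (sq_sqrt hA.le).symm
    have e2 : B / (√B / √A) = √A * √B := by
      field_simp
      exact (sq_sqrt (hA.trans_le hAB).le).symm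
    linarith

end Real

lemma Finset.sum_Icc_one_sub_pred {G : Type*} [AddCommGroup G] (f : ℕ → G) (n : ℕ) :
    ∑ k ∈ Icc 1 n, (f k - f (k - 1)) = f n - f 0 := by
  induction n with
  | zero => simp
  | succ n ih => rw [sum_Icc_succ_top (by omega), ih]; simp

namespace MeasureTheory

variable {Ω : Type*} [MeasurableSpace Ω] {μ : Measure Ω}

lemma Integrable.finset_sup' {β ι : Type*} [NormedAddCommGroup β] [Lattice β] [HasSolidNorm β]
    [IsOrderedAddMonoid β] {s : Finset ι} (hs : s.Nonempty) {f : ι → Ω → β}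
    (hf : ∀ i ∈ s, Integrable (f i) μ) : Integrable (fun x => s.sup' hs fun i => f i x) μ :=
  (Finset.sup'_induction (p := fun g => Integrable g μ) hs _ (fun _ hf _ hg => hf.sup hg) hf).congr
    (ae_of_all _ (Finset.sup'_apply hs f))

lemma Integrable.sqrt_sq_add_sq {f g : Ω → ℝ} (hf : Integrable f μ) (hg : Integrable g μ) :
    Integrable (fun x => √(f x ^ 2 + g x ^ 2)) μ := by
  refine (hf.abs.add hg.abs).mono' ?_ (ae_of_all _ fun x => ?_)
  · exact ((hf.aemeasurable.pow_const 2).add (hg.aemeasurable.pow_const 2)).sqrt.aestronglyMeasurable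
  · rw [Real.norm_of_nonneg (Real.sqrt_nonneg _), Pi.add_apply, Real.sqrt_le_left (by positivity)]
    nlinarith [abs_nonneg (f x), abs_nonneg (g x), sq_abs (f x), sq_abs (g x)]

variable {n : ℕ} {M V w : ℕ → Ω → ℝ}

lemma integral_sqrt_sum_sq_le (hM : ∀ k ∈ range (n + 1), Integrable (M k) μ)
    (hM₀ : 0 ≤ M 0) (hV : ∀ k ∈ Icc 1 n, Integrable (V k) μ) {l : ℝ} (hl : 1 ≤ l) :
    ∫ x, √(∑ k ∈ Icc 1 n, V k x ^ 2) ∂μ ≤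
      l * ∑ k ∈ Icc 1 n, ((∫ x, √(M (k - 1) x ^ 2 + V k x ^ 2) ∂μ) - ∫ x, M (k - 1) x ∂μ) +
        (∫ x, (range (n + 1)).sup' nonempty_range_add_one (fun k => M k x) ∂μ) / l := by
  have hpred : ∀ k ∈ Icc 1 n, k - 1 ∈ range (n + 1) := fun k hk => by
    simp only [mem_Icc, mem_range] at hk ⊢
    omega
  have hmax := Integrable.finset_sup' nonempty_range_add_one hM
  have hsqrt : ∀ k ∈ Icc 1 n, Integrable (fun x => √(M (k - 1) x ^ 2 + V k x ^ 2)) μ :=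
    fun k hk => (hM _ (hpred k hk)).sqrt_sq_add_sq (hV k hk)
  have hdiff : ∀ k ∈ Icc 1 n,
      Integrable (fun x => √(M (k - 1) x ^ 2 + V k x ^ 2) - M (k - 1) x) μ :=
    fun k hk => (hsqrt k hk).sub (hM _ (hpred k hk))
  calc _ ≤ ∫ x, (l * ∑ k ∈ Icc 1 n, (√(M (k - 1) x ^ 2 + V k x ^ 2) - M (k - 1) x) +
          (range (n + 1)).sup' nonempty_range_add_one (fun k => M k x) / l) ∂μ :=
        integral_mono_of_nonneg (ae_of_all _ fun _ => Real.sqrt_nonneg _)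
          (((integrable_finsetSum _ hdiff).const_mul l).add (hmax.div_const l))
          (ae_of_all _ fun x => Real.sqrt_sum_sq_le_mul_sum_add_div _
            ((hM₀ x).trans (le_sup' (fun k => M k x) (mem_range.2 n.succ_pos)))
            (fun k hk => le_sup' (fun k => M k x) (hpred k hk)) hl)
    _ = _ := by
        rw [integral_add ((integrable_finsetSum _ hdiff).const_mul l) (hmax.div_const l),
          integral_const_mul, integral_finsetSum _ hdiff, integral_div]
        congr 2
        exact sum_congr rfl fun k hk => integral_sub (hsqrt k hk) (hM _ (hpred k hk))

lemma integral_sqrt_sum_sq_add_integral_sum_le (hM : ∀ k ∈ range (n + 1), Integrable (M k) μ)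
    (hM₀ : 0 ≤ M 0) (hV : ∀ k ∈ Icc 1 n, Integrable (V k) μ)
    (hw : ∀ k ∈ Icc 1 n, Integrable (w k) μ) (hw₀ : ∀ k ∈ Icc 1 n, 0 ≤ w k)
    (hyp : ∀ k ∈ Icc 1 n,
      (∫ x, √(M (k - 1) x ^ 2 + V k x ^ 2) ∂μ) + (∫ x, w k x ∂μ) ≤ ∫ x, M k x ∂μ)
    {l : ℝ} (hl : 1 ≤ l) :
    (∫ x, √(∑ k ∈ Icc 1 n, V k x ^ 2) ∂μ) + (∫ x, ∑ k ∈ Icc 1 n, w k x ∂μ) ≤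
      l * (∫ x, M n x ∂μ) +
        (∫ x, (range (n + 1)).sup' nonempty_range_add_one (fun k => M k x) ∂μ) / l := by
  rw [integral_finsetSum _ hw]
  set W := ∑ k ∈ Icc 1 n, ∫ x, w k x ∂μ
  have hW₀ : 0 ≤ W := sum_nonneg fun k hk => integral_nonneg (hw₀ k hk)
  have htelescope : ∑ k ∈ Icc 1 n,
      ((∫ x, √(M (k - 1) x ^ 2 + V k x ^ 2) ∂μ) - ∫ x, M (k - 1) x ∂μ) ≤
        (∫ x, M n x ∂μ) - (∫ x, M 0 x ∂μ) - W := calc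
    _ ≤ ∑ k ∈ Icc 1 n, (((∫ x, M k x ∂μ) - ∫ x, M (k - 1) x ∂μ) - ∫ x, w k x ∂μ) :=
      sum_le_sum fun k hk => by linarith [hyp k hk]
    _ = _ := by rw [sum_sub_distrib, sum_Icc_one_sub_pred (fun k => ∫ x, M k x ∂μ)]
  have hl₀ : 0 ≤ l := by linarith
  linarith [integral_sqrt_sum_sq_le hM hM₀ hV hl, mul_le_mul_of_nonneg_left htelescope hl₀,
    le_mul_of_one_le_left hW₀ hl, mul_nonneg hl₀ (integral_nonneg (μ := μ) hM₀)]

end MeasureTheory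

theorem iteration_lemma_general (Ω : Type) [MeasurableSpace Ω] (μ : Measure Ω)
    (n : ℕ) (M V w : ℕ → Ω → ℝ)
    (hM : ∀ k, k ≤ n → Integrable (M k) μ ∧ ∀ x, 0 ≤ M k x)
    (hV : ∀ k, 1 ≤ k → k ≤ n → Integrable (V k) μ ∧ ∀ x, 0 ≤ V k x)
    (hw : ∀ k, 1 ≤ k → k ≤ n → Integrable (w k) μ ∧ ∀ x, 0 ≤ w k x)
    (hyp : ∀ k, 1 ≤ k → k ≤ n →
      (∫ x, Real.sqrt ((M (k-1) x) ^ 2 + (V k x) ^ 2) ∂μ) + (∫ x, w k x ∂μ)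
        ≤ ∫ x, M k x ∂μ) :
    (∫ x, Real.sqrt (∑ k ∈ Finset.Icc 1 n, (V k x) ^ 2) ∂μ)
      + (∫ x, ∑ k ∈ Finset.Icc 1 n, w k x ∂μ)
    ≤ 2 * Real.sqrt (∫ x, M n x ∂μ)
        * Real.sqrt (∫ x,
            (Finset.range (n+1)).sup' Finset.nonempty_range_add_one (fun k => M k x) ∂μ) := by
  have hMint : ∀ k ∈ range (n + 1), Integrable (M k) μ :=
    fun k hk => (hM k (Nat.lt_succ_iff.1 (mem_range.1 hk))).1
  have hM_le_max : ∫ x, M n x ∂μ ≤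
      ∫ x, (range (n + 1)).sup' nonempty_range_add_one (fun k => M k x) ∂μ :=
    integral_mono (hMint n (self_mem_range_succ n)) (Integrable.finset_sup' _ hMint)
      fun x => le_sup' (fun k => M k x) (self_mem_range_succ n)
  refine Real.le_two_mul_sqrt_mul_sqrt_of_forall_le (integral_nonneg (hM n le_rfl).2)
    hM_le_max fun l hl => ?_
  have hIcc : ∀ {k}, k ∈ Icc 1 n → 1 ≤ k ∧ k ≤ n := mem_Icc.1
  exact integral_sqrt_sum_sq_add_integral_sum_le hMint (hM 0 n.zero_le).2
    (fun k hk => (hV k (hIcc hk).1 (hIcc hk).2).1) (fun k hk => (hw k (hIcc hk).1 (hIcc hk).2).1)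
    (fun k hk => (hw k (hIcc hk).1 (hIcc hk).2).2) (fun k hk => hyp k (hIcc hk).1 (hIcc hk).2) hl

/-- **Iteration lemma.** If nonnegative integrable `M_0, …, M_n`, `V_1, …, V_n`,
`w_1, …, w_n` satisfy `E (M_{k-1}² + V_k²)^{1/2} + E w_k ≤ E M_k` for `1 ≤ k ≤ n`, then
`E (∑ V_k²)^{1/2} + E ∑ w_k ≤ 2 (E M_n)^{1/2} (E max_{k ≤ n} M_k)^{1/2}`. -/
theorem iteration_lemma (Ω : Type) [MeasurableSpace Ω] (μ : Measure Ω)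
    [IsProbabilityMeasure μ] (n : ℕ) (M V w : ℕ → Ω → ℝ)
    (hM : ∀ k, k ≤ n → Integrable (M k) μ ∧ ∀ x, 0 ≤ M k x)
    (hV : ∀ k, 1 ≤ k → k ≤ n → Integrable (V k) μ ∧ ∀ x, 0 ≤ V k x)
    (hw : ∀ k, 1 ≤ k → k ≤ n → Integrable (w k) μ ∧ ∀ x, 0 ≤ w k x)
    (hyp : ∀ k, 1 ≤ k → k ≤ n →
      (∫ x, Real.sqrt ((M (k-1) x) ^ 2 + (V k x) ^ 2) ∂μ) + (∫ x, w k x ∂μ)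
        ≤ ∫ x, M k x ∂μ) :
    (∫ x, Real.sqrt (∑ k ∈ Finset.Icc 1 n, (V k x) ^ 2) ∂μ)
      + (∫ x, ∑ k ∈ Finset.Icc 1 n, w k x ∂μ)
    ≤ 2 * Real.sqrt (∫ x, M n x ∂μ)
        * Real.sqrt (∫ x,
            (Finset.range (n+1)).sup' Finset.nonempty_range_add_one (fun k => M k x) ∂μ) :=
  iteration_lemma_general Ω μ n M V w hM hV hw hyp
end
end

section
/- Arithmetic lemma: let μ, b ∈ ℂ with (μ, b) ≠ (0, 0), and set a = |μ| + |μ − b|²/(|μ| + |b|). Then for every w ∈ ℂ with |w| = 1: (a − |b|)² ≤ 4(Im²(w·(μ − b)) + Re²(w·μ)), and |μ − b|² ≤ 2(a² − |μ|²). -/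
/-!
Put `u = wμ` and `v = w(μ - b)`, so that `‖u‖ = ‖μ‖`, `‖v‖ = ‖μ - b‖`, `‖u - v‖ = ‖b‖`, and write
`s = ‖u‖ + ‖u - v‖`. By the law of cosines `a - ‖b‖ = 2 Re(u v̄) / s`, so the first inequality is
`Re(u v̄)² ≤ s² X` with `X = (Re u)² + (Im v)²`. If `X ≤ ‖u‖²`, Cauchy–Schwarz gives
`|Re(u v̄) - X| ≤ √X ‖u - v‖`, hence `|Re(u v̄)| ≤ √X (√X + ‖u - v‖) ≤ √X s`. Otherwise
`(Im u)² + (Re v)² < ‖v‖² ≤ s²`, and Cauchy–Schwarz pairs `X` with this quantity instead.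
The second inequality follows from `|‖μ‖ - ‖b‖| ≤ ‖μ - b‖` after clearing the denominator.
-/

open Complex ComplexConjugate

theorem sq_le_sq_add_mul_sq_of_sq_sub_le {c x m B : ℝ} (hx : 0 ≤ x) (hxm : x ≤ m) (hB : 0 ≤ B)
    (h : (c - x ^ 2) ^ 2 ≤ (x * B) ^ 2) : c ^ 2 ≤ (m + B) ^ 2 * x ^ 2 := by
  have hc := abs_le_of_sq_le_sq' h (by positivity)
  rw [← mul_pow]
  apply sq_le_sq' <;> nlinarith

theorem re_mul_conj_sq_le (u v : ℂ) :
    (u * conj v).re ^ 2 ≤ (‖u‖ + ‖u - v‖) ^ 2 * (u.re ^ 2 + v.im ^ 2) := by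
  have hre : (u * conj v).re = u.re * v.re + u.im * v.im := by simp [mul_re]
  have hu : ‖u‖ ^ 2 = u.re ^ 2 + u.im ^ 2 := by rw [Complex.sq_norm, normSq_apply]; ring
  have hv : ‖v‖ ^ 2 = v.re ^ 2 + v.im ^ 2 := by rw [Complex.sq_norm, normSq_apply]; ring
  have huv : ‖u - v‖ ^ 2 = (u.re - v.re) ^ 2 + (u.im - v.im) ^ 2 := by
    rw [Complex.sq_norm, normSq_apply]; simp only [sub_re, sub_im]; ring
  rw [hre]
  set X := u.re ^ 2 + v.im ^ 2
  rcases le_or_gt X (‖u‖ ^ 2) with hX | hX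
  · have hsq : √X ^ 2 = X := Real.sq_sqrt (by positivity)
    rw [← hsq]
    refine sq_le_sq_add_mul_sq_of_sq_sub_le (Real.sqrt_nonneg X)
      ((Real.sqrt_le_left (norm_nonneg u)).2 hX) (norm_nonneg _) ?_
    rw [hsq, mul_pow, hsq, huv]
    nlinarith [sq_nonneg (u.re * (u.im - v.im) + v.im * (u.re - v.re))]
  · have hvu : ‖v‖ ≤ ‖u‖ + ‖u - v‖ := by simpa using norm_sub_le u (u - v)
    have hY : u.im ^ 2 + v.re ^ 2 ≤ (‖u‖ + ‖u - v‖) ^ 2 := by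
      nlinarith [pow_le_pow_left₀ (norm_nonneg v) hvu 2]
    calc (u.re * v.re + u.im * v.im) ^ 2 ≤ X * (u.im ^ 2 + v.re ^ 2) := by
          nlinarith [sq_nonneg (u.re * u.im - v.re * v.im)]
      _ ≤ _ := by rw [mul_comm]; exact mul_le_mul_of_nonneg_right hY (by positivity)

theorem sq_norm_add_sq_div_sub_le (u v : ℂ) :
    (‖u‖ + ‖v‖ ^ 2 / (‖u‖ + ‖u - v‖) - ‖u - v‖) ^ 2 ≤ 4 * (v.im ^ 2 + u.re ^ 2) := by
  rcases (add_nonneg (norm_nonneg u) (norm_nonneg (u - v))).eq_or_lt with hs | hs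
  · obtain ⟨hu, huv⟩ := (add_eq_zero_iff_of_nonneg (norm_nonneg _) (norm_nonneg _)).1 hs.symm
    rw [norm_eq_zero] at hu huv
    obtain rfl : v = 0 := by simpa [hu] using huv
    simp [hu]
  · have hcos : ‖u‖ ^ 2 + ‖v‖ ^ 2 - ‖u - v‖ ^ 2 = 2 * (u * conj v).re := by
      simp only [Complex.sq_norm, normSq_sub]; ring
    have hlhs : ‖u‖ + ‖v‖ ^ 2 / (‖u‖ + ‖u - v‖) - ‖u - v‖
        = 2 * (u * conj v).re / (‖u‖ + ‖u - v‖) := by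
      rw [← hcos]; field_simp; ring
    rw [hlhs, div_pow, div_le_iff₀ (by positivity)]
    nlinarith [re_mul_conj_sq_le u v]

theorem sq_le_two_mul_sq_add_sq_div_sub_sq {m B d : ℝ} (hm : 0 ≤ m) (hB : 0 ≤ B)
    (hdm : |m - B| ≤ d) (hds : d ≤ m + B) : d ^ 2 ≤ 2 * ((m + d ^ 2 / (m + B)) ^ 2 - m ^ 2) := by
  rcases (add_nonneg hm hB).eq_or_lt with hs | hs
  · obtain rfl : d = 0 := by linarith [(abs_nonneg _).trans hdm]
    simp
  · have hd2 : (m - B) ^ 2 ≤ d ^ 2 := by simpa using sq_le_sq' (abs_le.1 hdm).1 (abs_le.1 hdm).2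
    have hrhs : 2 * ((m + d ^ 2 / (m + B)) ^ 2 - m ^ 2) - d ^ 2
        = d ^ 2 * (4 * m * (m + B) + 2 * d ^ 2 - (m + B) ^ 2) / (m + B) ^ 2 := by
      field_simp; ring
    rw [← sub_nonneg, hrhs]
    -- `4m(m + B) + 2(m - B)² - (m + B)² = 4m² + (m - B)²`
    have : 0 ≤ 4 * m * (m + B) + 2 * d ^ 2 - (m + B) ^ 2 := by nlinarith
    positivity

theorem arithmetic_lemma_general (μ b : ℂ)
    (w : ℂ) (hw : ‖w‖ = 1) :
    (‖μ‖ + (‖μ - b‖) ^ 2 / (‖μ‖ + ‖b‖)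
        - ‖b‖) ^ 2
      ≤ 4 * (((w * (μ - b)).im) ^ 2 + ((w * μ).re) ^ 2) ∧
    (‖μ - b‖) ^ 2
      ≤ 2 * ((‖μ‖
            + (‖μ - b‖) ^ 2 / (‖μ‖ + ‖b‖)) ^ 2
          - (‖μ‖) ^ 2) := by
  have hnorm (z : ℂ) : ‖w * z‖ = ‖z‖ := by rw [norm_mul, hw, one_mul]
  refine ⟨?_, sq_le_two_mul_sq_add_sq_div_sub_sq (norm_nonneg μ) (norm_nonneg b)
    (abs_norm_sub_norm_le μ b) (norm_sub_le μ b)⟩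
  have h := sq_norm_add_sq_div_sub_le (w * μ) (w * (μ - b))
  rwa [← mul_sub, sub_sub_cancel, hnorm, hnorm, hnorm] at h

/-- **Arithmetic lemma.** For `μ, b ∈ ℂ` with `(μ, b) ≠ (0, 0)` and
`a = |μ| + |μ - b|²/(|μ| + |b|)`, every unimodular `w` satisfies
`(a - |b|)² ≤ 4 (Im²(w(μ - b)) + Re²(w μ))` and `|μ - b|² ≤ 2 (a² - |μ|²)`. -/
theorem arithmetic_lemma (μ b : ℂ) (hμb : ¬(μ = 0 ∧ b = 0))
    (w : ℂ) (hw : ‖w‖ = 1) :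
    (‖μ‖ + (‖μ - b‖) ^ 2 / (‖μ‖ + ‖b‖)
        - ‖b‖) ^ 2
      ≤ 4 * (((w * (μ - b)).im) ^ 2 + ((w * μ).re) ^ 2) ∧
    (‖μ - b‖) ^ 2
      ≤ 2 * ((‖μ‖
            + (‖μ - b‖) ^ 2 / (‖μ‖ + ‖b‖)) ^ 2
          - (‖μ‖) ^ 2) :=
  arithmetic_lemma_general μ b w hw
end
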